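/- For even n ≥ 2, in the group presented by ⟨a, b | (ba)^{n/2}(ab)^{(n-2)/2} = (ab)^{(n-2)/2} a (ab)^{(n-2)/2} a, ab(ba)^{n/2} a (ba)^{(n-4)/2} = b(ba)^{n/2}(ab)^{(n-2)/2}⟩, the element ab commutes with (ba)^{n/2}. -/

import Mathlib

/-- The free group on two generators. -/
abbrev F : Type := FreeGroup (Fin 2)

/-- The generator `a`. -/
def a : F := FreeGroup.of 0

/-- The generator `b`. -/
def b : F := FreeGroup.of 1

/-- The relators of `⟨a, b | (ba)^{n/2}(ab)^{(n-2)/2} = (ab)^{(n-2)/2} a (ab)^{(n-2)/2} a,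
ab(ba)^{n/2} a (ba)^{(n-4)/2} = b(ba)^{n/2}(ab)^{(n-2)/2}⟩`. -/
def rels (n : ℕ) : Set F :=
  {(b * a) ^ (n / 2) * (a * b) ^ ((n - 2) / 2) *
     ((a * b) ^ ((n - 2) / 2) * a * (a * b) ^ ((n - 2) / 2) * a)⁻¹,
   a * b * (b * a) ^ (n / 2) * a * (b * a) ^ ((n - 4) / 2) *
     (b * (b * a) ^ (n / 2) * (a * b) ^ ((n - 2) / 2))⁻¹}

/-- The quotient map from the free group to the presented group. -/
def π (n : ℕ) : F →* PresentedGroup (rels n) :=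
  QuotientGroup.mk' (Subgroup.normalClosure (rels n))

/-! With `x, y` the images of `a, b` and `k = n / 2 ≥ 2`, the identity `y (xy)^m = (yx)^m y` and the
first relation turn the right side `y (yx)^k (xy)^(k-1)` of the second relation into
`(yx)^k x (yx)^(k-1) = (yx)^k (xy) · x (yx)^(k-2)`, while its left side is
`(xy) (yx)^k · x (yx)^(k-2)`; cancelling `x (yx)^(k-2)` leaves `(xy) (yx)^k = (yx)^k (xy)`.
For `k = 1` the first relation reads `yx = xx`, so `x = y`. -/

theorem commute_mul_pow_of_relations {G : Type*} [Group G] {x y : G} {k : ℕ}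
    (h₁ : (y * x) ^ (k + 2) * (x * y) ^ (k + 1) = (x * y) ^ (k + 1) * x * (x * y) ^ (k + 1) * x)
    (h₂ : x * y * (y * x) ^ (k + 2) * x * (y * x) ^ k = y * (y * x) ^ (k + 2) * (x * y) ^ (k + 1)) :
    Commute (x * y) ((y * x) ^ (k + 2)) := by
  refine mul_right_cancel (b := x * (y * x) ^ k) ?_
  calc x * y * (y * x) ^ (k + 2) * (x * (y * x) ^ k)
      = y * ((y * x) ^ (k + 2) * (x * y) ^ (k + 1)) := by
        rw [← mul_assoc y, ← h₂]; simp only [mul_assoc]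
    _ = y * (x * y) ^ (k + 1) * x * ((x * y) ^ (k + 1) * x) := by simp only [h₁, mul_assoc]
    _ = (y * x) ^ (k + 1) * (y * x) * (x * (y * x) ^ (k + 1)) := by
      rw [← mul_pow_mul y x, mul_pow_mul x y]; simp only [mul_assoc]
    _ = (y * x) ^ (k + 2) * (x * y) * (x * (y * x) ^ k) := by
      rw [← pow_succ, pow_succ' (y * x) k]; simp only [mul_assoc]

theorem ab_commutes_with_ba_pow_general (n : ℕ) :
    Commute (π n (a * b)) (π n ((b * a) ^ (n / 2))) := by
  have h₁ := PresentedGroup.mk_eq_mk_of_mul_inv_mem (rels := rels n) (Set.mem_insert _ _)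
  have h₂ := PresentedGroup.mk_eq_mk_of_mul_inv_mem (rels := rels n)
    (Set.mem_insert_of_mem _ rfl)
  change π n _ = π n _ at h₁ h₂
  rw [show (n - 2) / 2 = n / 2 - 1 by omega] at h₁ h₂
  rw [show (n - 4) / 2 = n / 2 - 2 by omega] at h₂
  simp only [map_mul, map_pow] at h₁ h₂ ⊢
  generalize π n a = x, π n b = y, n / 2 = k at h₁ h₂ ⊢
  rcases k with _ | _ | k
  · rw [pow_zero]
    exact Commute.one_right _
  · obtain rfl : y = x := by simpa using h₁
    exact (Commute.refl _).pow_right 1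
  · exact commute_mul_pow_of_relations h₁ h₂

/-- For even `n ≥ 2`, in the group presented by
`⟨a, b | (ba)^{n/2}(ab)^{(n-2)/2} = (ab)^{(n-2)/2} a (ab)^{(n-2)/2} a,
ab(ba)^{n/2} a (ba)^{(n-4)/2} = b(ba)^{n/2}(ab)^{(n-2)/2}⟩`,
the element `ab` commutes with `(ba)^{n/2}`. -/
theorem ab_commutes_with_ba_pow (n : ℕ) (hn : Even n) (h2 : 2 ≤ n) :
    Commute (π n (a * b)) (π n ((b * a) ^ (n / 2))) :=
  ab_commutes_with_ba_pow_general n
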